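/- Suppose 2F₊ > F₋ > F₊ > 0, and let C*_B = conv{β₁,…,β₆} with β₁ = (-F₊, F₋ - F₊), β₂ = (F₊ - F₋, F₊), β₃ = (F₋, F₊), β₄ = (F₋, F₋ - F₊), β₅ = (F₊ - F₋, -F₋), β₆ = (-F₊, -F₋). Then ξ ∈ ℝ² satisfies ⟨ξ, w⟩ ≤ D_sh(w) for all w ∈ ℝ² if and only if ξ ∈ C*_B. -/

import Mathlib

noncomputable def d (Fp Fm x : ℝ) : ℝ := Fp * max x 0 - Fm * min x 0

noncomputable def D (Fp Fm : ℝ) (w : ℝ × ℝ) (v : ℝ) : ℝ :=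
  d Fp Fm (v - w.1) + d Fp Fm v + d Fp Fm (v + w.2)

noncomputable def Dsh (Fp Fm : ℝ) (w : ℝ × ℝ) : ℝ := ⨅ v : ℝ, D Fp Fm w v

/-- Standard inner product on ℝ². -/
def dot (x y : ℝ × ℝ) : ℝ := x.1 * y.1 + x.2 * y.2

/-!
`d Fp Fm` is the support function of `[-Fm, Fp]`: `d x = max (Fp * x) (-Fm * x)`. Writing
`dot ξ w = -ξ₁ (v - w₁) + (ξ₁ - ξ₂) v + ξ₂ (v + w₂)`, the bound `dot ξ w ≤ D w v` holds for all
`w, v` exactly when `-ξ₁`, `ξ₁ - ξ₂` and `ξ₂` lie in `[-Fm, Fp]`. These six inequalities cut out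
a hexagon, which is convex as an intersection of half-planes `dot · w ≤ Dsh w`. When `Fp < 2 Fm`
and `Fm < 2 Fp`, the line `ξ₂ = Fm - Fp` through `β₁` and `β₄` splits it into two trapezoids, each
swept by horizontal segments joining points of its two other sides, which are the edges
`β₆β₁, β₅β₄` and `β₁β₂, β₄β₃` of the convex hull.
-/

open Set

def hexagon (Fp Fm : ℝ) : Set (ℝ × ℝ) :=
  {ξ | -ξ.1 ∈ Icc (-Fm) Fp ∧ ξ.1 - ξ.2 ∈ Icc (-Fm) Fp ∧ ξ.2 ∈ Icc (-Fm) Fp}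

def hexagonVertices (Fp Fm : ℝ) : Set (ℝ × ℝ) :=
  {(-Fp, Fm - Fp), (Fp - Fm, Fp), (Fm, Fp), (Fm, Fm - Fp), (Fp - Fm, -Fm), (-Fp, -Fm)}

lemma convex_setOf_forall_dot_le (f : ℝ × ℝ → ℝ) : Convex ℝ {ξ | ∀ w, dot ξ w ≤ f w} := by
  simp only [ofPred_forall]
  refine convex_iInter fun w => convex_halfSpace_le ⟨fun x y => ?_, fun c x => ?_⟩ (f w)
  · simp only [dot, Prod.fst_add, Prod.snd_add]; ring
  · simp only [dot, Prod.smul_fst, Prod.smul_snd, smul_eq_mul]; ring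

lemma mem_segment_of_snd_mem_Icc {p q z : ℝ × ℝ} (hpq : p.2 < q.2) (hz : z.2 ∈ Icc p.2 q.2)
    (hcol : (z.1 - p.1) * (q.2 - p.2) = (z.2 - p.2) * (q.1 - p.1)) : z ∈ segment ℝ p q := by
  have hd : 0 < q.2 - p.2 := sub_pos.2 hpq
  rw [segment_eq_image_lineMap]
  refine ⟨(z.2 - p.2) / (q.2 - p.2), ⟨?_, ?_⟩, ?_⟩
  · exact div_nonneg (by linarith [hz.1]) hd.le
  · exact (div_le_one hd).2 (by linarith [hz.2])
  · ext
    · simp only [AffineMap.lineMap_apply_module', Prod.fst_add, Prod.fst_sub, Prod.smul_fst,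
        smul_eq_mul]
      field_simp
      linarith
    · simp only [AffineMap.lineMap_apply_module', Prod.snd_add, Prod.snd_sub, Prod.smul_snd,
        smul_eq_mul]
      field_simp
      ring

lemma mk_mem_segment_mk {x₁ x₂ x : ℝ} (hx : x ∈ Icc x₁ x₂) (y : ℝ) :
    (x, y) ∈ segment ℝ (x₁, y) (x₂, y) := by
  rw [← Prod.image_mk_segment_left, segment_eq_Icc (hx.1.trans hx.2)]
  exact ⟨x, hx, rfl⟩

section

variable {Fp Fm : ℝ}

lemma d_nonneg (hp : 0 ≤ Fp) (hm : 0 ≤ Fm) (x : ℝ) : 0 ≤ d Fp Fm x := by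
  unfold d
  nlinarith [le_max_right x 0, min_le_right x 0]

lemma mul_le_d {t : ℝ} (ht : t ∈ Icc (-Fm) Fp) (x : ℝ) : t * x ≤ d Fp Fm x := by
  unfold d
  rcases le_total x 0 with hx | hx
  · rw [max_eq_right hx, min_eq_left hx]
    nlinarith [ht.1]
  · rw [max_eq_left hx, min_eq_right hx]
    nlinarith [ht.2]

lemma Dsh_le_D (hp : 0 ≤ Fp) (hm : 0 ≤ Fm) (w : ℝ × ℝ) (v : ℝ) : Dsh Fp Fm w ≤ D Fp Fm w v := by
  refine ciInf_le ⟨0, ?_⟩ v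
  rintro _ ⟨u, rfl⟩
  unfold D
  linarith [d_nonneg hp hm (u - w.1), d_nonneg hp hm u, d_nonneg hp hm (u + w.2)]

lemma dot_le_Dsh_of_mem_hexagon {ξ : ℝ × ℝ} (hξ : ξ ∈ hexagon Fp Fm) (w : ℝ × ℝ) :
    dot ξ w ≤ Dsh Fp Fm w := by
  obtain ⟨h₁, h₂, h₃⟩ := hξ
  refine le_ciInf fun v => ?_
  have hsplit : dot ξ w = -ξ.1 * (v - w.1) + (ξ.1 - ξ.2) * v + ξ.2 * (v + w.2) := by
    unfold dot; ring
  rw [hsplit]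
  exact add_le_add (add_le_add (mul_le_d h₁ _) (mul_le_d h₂ _)) (mul_le_d h₃ _)

lemma mem_hexagon_of_forall_dot_le_Dsh (hp : 0 ≤ Fp) (hm : 0 ≤ Fm) {ξ : ℝ × ℝ}
    (h : ∀ w, dot ξ w ≤ Dsh Fp Fm w) : ξ ∈ hexagon Fp Fm := by
  have key (w : ℝ × ℝ) (v : ℝ) : dot ξ w ≤ D Fp Fm w v := (h w).trans (Dsh_le_D hp hm w v)
  have e₁ := key (1, 0) 0
  have e₂ := key (-1, 0) 0
  have e₃ := key (1, -1) 1
  have e₄ := key (-1, 1) (-1)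
  have e₅ := key (0, -1) 0
  have e₆ := key (0, 1) 0
  norm_num [dot, D, d] at e₁ e₂ e₃ e₄ e₅ e₆
  refine ⟨⟨?_, ?_⟩, ⟨?_, ?_⟩, ⟨?_, ?_⟩⟩ <;> linarith

lemma forall_dot_le_Dsh_iff_mem_hexagon (hp : 0 ≤ Fp) (hm : 0 ≤ Fm) (ξ : ℝ × ℝ) :
    (∀ w, dot ξ w ≤ Dsh Fp Fm w) ↔ ξ ∈ hexagon Fp Fm :=
  ⟨mem_hexagon_of_forall_dot_le_Dsh hp hm, dot_le_Dsh_of_mem_hexagon⟩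

lemma convex_hexagon (hp : 0 ≤ Fp) (hm : 0 ≤ Fm) : Convex ℝ (hexagon Fp Fm) := by
  have hpolar : hexagon Fp Fm = {ξ | ∀ w, dot ξ w ≤ Dsh Fp Fm w} :=
    ext fun ξ => (forall_dot_le_Dsh_iff_mem_hexagon hp hm ξ).symm
  rw [hpolar]
  exact convex_setOf_forall_dot_le _

lemma hexagonVertices_subset_hexagon (hp : Fp ≤ 2 * Fm) (hm : Fm ≤ 2 * Fp) :
    hexagonVertices Fp Fm ⊆ hexagon Fp Fm := by
  intro β hβ
  simp only [hexagonVertices, mem_insert_iff, mem_singleton_iff] at hβ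
  rcases hβ with rfl | rfl | rfl | rfl | rfl | rfl <;>
    refine ⟨⟨?_, ?_⟩, ⟨?_, ?_⟩, ⟨?_, ?_⟩⟩ <;> dsimp <;> linarith

lemma mem_convexHull_of_lower {ξ : ℝ × ℝ} (hp : Fp < 2 * Fm)
    (hy : ξ.2 ∈ Icc (-Fm) (Fm - Fp)) (hx : ξ.1 ∈ Icc (-Fp) (ξ.2 + Fp)) :
    ξ ∈ convexHull ℝ (hexagonVertices Fp Fm) := by
  have hleft : (-Fp, ξ.2) ∈ convexHull ℝ (hexagonVertices Fp Fm) :=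
    segment_subset_convexHull (by simp [hexagonVertices]) (by simp [hexagonVertices])
      (mem_segment_of_snd_mem_Icc (p := (-Fp, -Fm)) (q := (-Fp, Fm - Fp)) (by dsimp; linarith) hy
        (by ring))
  have hright : (ξ.2 + Fp, ξ.2) ∈ convexHull ℝ (hexagonVertices Fp Fm) :=
    segment_subset_convexHull (by simp [hexagonVertices]) (by simp [hexagonVertices])
      (mem_segment_of_snd_mem_Icc (p := (Fp - Fm, -Fm)) (q := (Fm, Fm - Fp)) (by dsimp; linarith) hy
        (by ring))
  exact (convex_convexHull ℝ _).segment_subset hleft hright (mk_mem_segment_mk hx ξ.2)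

lemma mem_convexHull_of_upper {ξ : ℝ × ℝ} (hm : Fm < 2 * Fp)
    (hy : ξ.2 ∈ Icc (Fm - Fp) Fp) (hx : ξ.1 ∈ Icc (ξ.2 - Fm) Fm) :
    ξ ∈ convexHull ℝ (hexagonVertices Fp Fm) := by
  have hleft : (ξ.2 - Fm, ξ.2) ∈ convexHull ℝ (hexagonVertices Fp Fm) :=
    segment_subset_convexHull (by simp [hexagonVertices]) (by simp [hexagonVertices])
      (mem_segment_of_snd_mem_Icc (p := (-Fp, Fm - Fp)) (q := (Fp - Fm, Fp)) (by dsimp; linarith) hy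
        (by ring))
  have hright : (Fm, ξ.2) ∈ convexHull ℝ (hexagonVertices Fp Fm) :=
    segment_subset_convexHull (by simp [hexagonVertices]) (by simp [hexagonVertices])
      (mem_segment_of_snd_mem_Icc (p := (Fm, Fm - Fp)) (q := (Fm, Fp)) (by dsimp; linarith) hy
        (by ring))
  exact (convex_convexHull ℝ _).segment_subset hleft hright (mk_mem_segment_mk hx ξ.2)

lemma hexagon_subset_convexHull (hp : Fp < 2 * Fm) (hm : Fm < 2 * Fp) :
    hexagon Fp Fm ⊆ convexHull ℝ (hexagonVertices Fp Fm) := by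
  rintro ξ ⟨⟨hx₁, hx₂⟩, ⟨hxy₁, hxy₂⟩, ⟨hy₁, hy₂⟩⟩
  rcases le_total ξ.2 (Fm - Fp) with hy | hy
  · exact mem_convexHull_of_lower hp ⟨hy₁, hy⟩ ⟨by linarith, by linarith⟩
  · exact mem_convexHull_of_upper hm ⟨hy, hy₂⟩ ⟨by linarith, by linarith⟩

lemma hexagon_eq_convexHull (hp : Fp < 2 * Fm) (hm : Fm < 2 * Fp) :
    hexagon Fp Fm = convexHull ℝ (hexagonVertices Fp Fm) :=
  (hexagon_subset_convexHull hp hm).antisymm <| convexHull_min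
    (hexagonVertices_subset_hexagon hp.le hm.le) (convex_hexagon (by linarith) (by linarith))

end

theorem subdiff_at_zero_B (Fp Fm : ℝ) (hp : 0 < Fp) (h1 : Fp < Fm)
    (h2 : Fm < 2 * Fp) :
    ∀ ξ : ℝ × ℝ,
      (∀ w : ℝ × ℝ, dot ξ w ≤ Dsh Fp Fm w) ↔
        ξ ∈ convexHull ℝ
          ({(-Fp, Fm - Fp), (Fp - Fm, Fp), (Fm, Fp), (Fm, Fm - Fp),
            (Fp - Fm, -Fm), (-Fp, -Fm)} : Set (ℝ × ℝ)) := by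
  intro ξ
  have hFm : Fp < 2 * Fm := by linarith
  rw [forall_dot_le_Dsh_iff_mem_hexagon hp.le (by linarith), hexagon_eq_convexHull hFm h2]
  rfl
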